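/- The singular potential ψ_s is strictly convex on Q: for b₁ ≠ b₂ in Q and ε ∈ (0,1), ψ_s(εb₁ + (1−ε)b₂) < εψ_s(b₁) + (1−ε)ψ_s(b₂). -/

import Mathlib

open MeasureTheory Filter

def probDens {X : Type*} [MeasurableSpace X] (μ : Measure X) : Set (X → ℝ) :=
  {ρ | Integrable ρ μ ∧ 0 ≤ᵐ[μ] ρ ∧ ∫ t, ρ t ∂μ = 1}

/-- The vector of moments of `a` under the density `ρ`. -/
noncomputable def mom {X : Type*} [MeasurableSpace X] (μ : Measure X) {k : ℕ}
    (a : X → EuclideanSpace ℝ (Fin k)) (ρ : X → ℝ) : EuclideanSpace ℝ (Fin k) :=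
  (EuclideanSpace.equiv (Fin k) ℝ).symm fun i => ∫ t, a t i * ρ t ∂μ

/-- The set `Q` of admissible moments. -/
def momentSet {X : Type*} [MeasurableSpace X] (μ : Measure X) {k : ℕ}
    (a : X → EuclideanSpace ℝ (Fin k)) : Set (EuclideanSpace ℝ (Fin k)) :=
  mom μ a '' probDens μ

/-!
Mix the two minimisers: `ρ = ε ρ₁ + (1 - ε) ρ₂` is a probability density whose moment is
`ε b₁ + (1 - ε) b₂`, so `ψ` there is at most `∫ φ ∘ ρ`. Since `b₁ ≠ b₂`, the minimisers differ on
a set of positive measure, where strict convexity puts `φ ∘ ρ` strictly below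
`ε φ ∘ ρ₁ + (1 - ε) φ ∘ ρ₂`; integrating gives the strict inequality. `φ ∘ ρ` is integrable because
it lies between that integrable upper bound and a supporting line of `φ`, which is integrable
against the finite measure `μ`.
-/

open Set

section ConvexReal

variable {S : Set ℝ} {f : ℝ → ℝ} {x y : ℝ}

lemma ConvexOn.add_rightDeriv_mul_sub_le (hf : ConvexOn ℝ S f) (hx : x ∈ interior S)
    (hy : y ∈ S) : f x + derivWithin f (Ioi x) x * (y - x) ≤ f y := by
  rcases lt_trichotomy y x with hyx | rfl | hxy
  · have hslope : slope f y x ≤ derivWithin f (Ioi x) x :=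
      (hf.slope_le_leftDeriv_of_mem_interior hy hx hyx).trans
        (hf.leftDeriv_le_rightDeriv_of_mem_interior hx)
    rw [slope_def_field, div_le_iff₀ (sub_pos.mpr hyx)] at hslope
    nlinarith
  · simp
  · have hslope := hf.rightDeriv_le_slope_of_mem_interior hx hy hxy
    rw [slope_def_field, le_div_iff₀ (sub_pos.mpr hxy)] at hslope
    linarith

end ConvexReal

section Integrals

variable {X : Type*} [MeasurableSpace X] {μ : Measure X} {s : Set ℝ} {φ : ℝ → ℝ}

lemma ContinuousOn.comp_aestronglyMeasurable_of_ae_mem (hφ : ContinuousOn φ s)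
    (hs : MeasurableSet s) {f : X → ℝ} (hf : AEMeasurable f μ) (hfs : ∀ᵐ t ∂μ, f t ∈ s) :
    AEStronglyMeasurable (fun t => φ (f t)) μ := by
  classical
  have hmeas : Measurable (s.piecewise φ 0) :=
    hφ.measurable_piecewise continuousOn_const hs
  refine (hmeas.comp_aemeasurable hf).aestronglyMeasurable.congr ?_
  filter_upwards [hfs] with t ht
  exact s.piecewise_eq_of_mem _ _ ht

lemma ConvexOn.integrable_comp_of_ae_le [IsFiniteMeasure μ] (hφ : ConvexOn ℝ s φ)
    (hs : IsOpen s) {f U : X → ℝ} (hf : Integrable f μ) (hfs : ∀ᵐ t ∂μ, f t ∈ s)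
    (hU : Integrable U μ) (hle : ∀ᵐ t ∂μ, φ (f t) ≤ U t) :
    Integrable (fun t => φ (f t)) μ := by
  rcases eq_zero_or_neZero μ with rfl | hμ
  · exact integrable_zero_measure
  obtain ⟨t₀, ht₀⟩ := hfs.exists
  set x₀ := f t₀
  set d := derivWithin φ (Ioi x₀) x₀
  have hx₀ : x₀ ∈ interior s := hs.interior_eq.symm ▸ ht₀
  have hL : Integrable (fun t => φ x₀ + d * (f t - x₀)) μ :=
    (integrable_const _).add ((hf.sub (integrable_const _)).const_mul _)
  have hmeas : AEStronglyMeasurable (fun t => φ (f t)) μ :=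
    (hφ.continuousOn hs).comp_aestronglyMeasurable_of_ae_mem hs.measurableSet hf.aemeasurable hfs
  refine integrable_of_le_of_le hmeas ?_ hle hL hU
  filter_upwards [hfs] with t ht
  exact hφ.add_rightDeriv_mul_sub_le hx₀ ht

variable {f g : X → ℝ} {a b : ℝ}

lemma ConvexOn.integrable_comp_smul_add_smul [IsFiniteMeasure μ] (hφ : ConvexOn ℝ s φ)
    (hs : IsOpen s) (hf : Integrable f μ) (hg : Integrable g μ) (hfs : ∀ᵐ t ∂μ, f t ∈ s)
    (hgs : ∀ᵐ t ∂μ, g t ∈ s) (hφf : Integrable (fun t => φ (f t)) μ)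
    (hφg : Integrable (fun t => φ (g t)) μ) (ha : 0 ≤ a) (hb : 0 ≤ b) (hab : a + b = 1) :
    Integrable (fun t => φ ((a • f + b • g) t)) μ := by
  refine hφ.integrable_comp_of_ae_le hs ((hf.smul a).add (hg.smul b)) ?_
    ((hφf.smul a).add (hφg.smul b)) ?_
  · filter_upwards [hfs, hgs] with t hft hgt
    exact hφ.1 hft hgt ha hb hab
  · filter_upwards [hfs, hgs] with t hft hgt
    exact hφ.2 hft hgt ha hb hab

lemma StrictConvexOn.integral_comp_smul_add_smul_lt (hφ : StrictConvexOn ℝ s φ)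
    (hfs : ∀ᵐ t ∂μ, f t ∈ s) (hgs : ∀ᵐ t ∂μ, g t ∈ s)
    (hφf : Integrable (fun t => φ (f t)) μ) (hφg : Integrable (fun t => φ (g t)) μ)
    (hφfg : Integrable (fun t => φ ((a • f + b • g) t)) μ) (hfg : ¬ f =ᵐ[μ] g)
    (ha : 0 < a) (hb : 0 < b) (hab : a + b = 1) :
    ∫ t, φ ((a • f + b • g) t) ∂μ < a * ∫ t, φ (f t) ∂μ + b * ∫ t, φ (g t) ∂μ := by
  have hU : Integrable (fun t => a * φ (f t) + b * φ (g t)) μ :=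
    (hφf.const_mul a).add (hφg.const_mul b)
  have hle : (fun t => φ ((a • f + b • g) t)) ≤ᵐ[μ] fun t => a * φ (f t) + b * φ (g t) := by
    filter_upwards [hfs, hgs] with t hft hgt
    exact hφ.convexOn.2 hft hgt ha.le hb.le hab
  rw [← integral_const_mul, ← integral_const_mul, ← integral_add (hφf.const_mul a)
    (hφg.const_mul b)]
  refine (integral_mono_ae hφfg hU hle).lt_of_ne fun heq => hfg ?_
  filter_upwards [(integral_eq_iff_of_ae_le hφfg hU hle).mp heq, hfs, hgs]
    with t ht hft hgt
  by_contra hne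
  exact (hφ.2 hft hgt hne ha hb hab).ne ht

end Integrals

section Moments

variable {X : Type*} [MeasurableSpace X] {μ : Measure X} {k : ℕ}
  {a : X → EuclideanSpace ℝ (Fin k)}

lemma convex_probDens : Convex ℝ (probDens μ) := by
  rintro ρ₁ ⟨hint₁, hnn₁, hmass₁⟩ ρ₂ ⟨hint₂, hnn₂, hmass₂⟩ c₁ c₂ hc₁ hc₂ hc
  refine ⟨(hint₁.smul c₁).add (hint₂.smul c₂), ?_, ?_⟩
  · filter_upwards [hnn₁, hnn₂] with t h₁ h₂
    exact add_nonneg (smul_nonneg hc₁ h₁) (smul_nonneg hc₂ h₂)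
  · rw [integral_add' (hint₁.smul c₁) (hint₂.smul c₂)]
    simp only [Pi.smul_apply, smul_eq_mul, integral_const_mul, hmass₁, hmass₂, mul_one, hc]

lemma integrable_coord_mul (ha : MemLp a ⊤ μ) {ρ : X → ℝ} (hρ : Integrable ρ μ) (i : Fin k) :
    Integrable (fun t => a t i * ρ t) μ :=
  hρ.mul_of_top_right ((EuclideanSpace.proj (𝕜 := ℝ) i).comp_memLp' ha)

lemma mom_add (ha : MemLp a ⊤ μ) {ρ₁ ρ₂ : X → ℝ} (hρ₁ : Integrable ρ₁ μ)
    (hρ₂ : Integrable ρ₂ μ) : mom μ a (ρ₁ + ρ₂) = mom μ a ρ₁ + mom μ a ρ₂ := by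
  ext i
  simp only [mom, Pi.add_apply, mul_add]
  exact integral_add (integrable_coord_mul ha hρ₁ i) (integrable_coord_mul ha hρ₂ i)

lemma mom_smul (c : ℝ) (ρ : X → ℝ) : mom μ a (c • ρ) = c • mom μ a ρ := by
  ext i
  simp only [mom, Pi.smul_apply, smul_eq_mul, mul_left_comm _ c]
  exact integral_const_mul c _

lemma mom_congr_ae {ρ₁ ρ₂ : X → ℝ} (h : ρ₁ =ᵐ[μ] ρ₂) : mom μ a ρ₁ = mom μ a ρ₂ := by
  ext i
  exact integral_congr_ae (h.mono fun t ht => by simp only [ht])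

end Moments

theorem singularPotential_strictConvex_general {X : Type*} [MeasurableSpace X]
    (μ : Measure X) [IsFiniteMeasure μ] {k : ℕ}
    (a : X → EuclideanSpace ℝ (Fin k)) (ha : MemLp a ⊤ μ)
    (φ : ℝ → ℝ)
    (hconv : StrictConvexOn ℝ (Set.Ioi 0) φ)
    (ψ : EuclideanSpace ℝ (Fin k) → ℝ) (ρmin : EuclideanSpace ℝ (Fin k) → X → ℝ)
    (hρP : ∀ b ∈ momentSet μ a, ρmin b ∈ probDens μ)
    (hρgen : ∀ b ∈ momentSet μ a, mom μ a (ρmin b) = b)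
    (hρpos : ∀ b ∈ momentSet μ a, ∀ᵐ t ∂μ, 0 < ρmin b t)
    (hρint : ∀ b ∈ momentSet μ a, Integrable (fun t => φ (ρmin b t)) μ)
    (hψ : ∀ b ∈ momentSet μ a, ψ b = ∫ t, φ (ρmin b t) ∂μ)
    (hmin : ∀ b ∈ momentSet μ a, ∀ ρ ∈ probDens μ, mom μ a ρ = b →
      Integrable (fun t => φ (ρ t)) μ → ψ b ≤ ∫ t, φ (ρ t) ∂μ) :
    ∀ b₁ ∈ momentSet μ a, ∀ b₂ ∈ momentSet μ a, b₁ ≠ b₂ →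
      ∀ ε : ℝ, 0 < ε → ε < 1 →
        ψ (ε • b₁ + (1 - ε) • b₂) < ε * ψ b₁ + (1 - ε) * ψ b₂ := by
  intro b₁ hb₁ b₂ hb₂ hne ε hε hε'
  have hε₁ : 0 < 1 - ε := sub_pos.mpr hε'
  set ρ := ε • ρmin b₁ + (1 - ε) • ρmin b₂
  have hρ : ρ ∈ probDens μ :=
    convex_probDens (hρP b₁ hb₁) (hρP b₂ hb₂) hε.le hε₁.le (add_sub_cancel ε 1)
  have hmom : mom μ a ρ = ε • b₁ + (1 - ε) • b₂ := by
    rw [mom_add ha ((hρP b₁ hb₁).1.smul ε) ((hρP b₂ hb₂).1.smul (1 - ε)), mom_smul, mom_smul,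
      hρgen b₁ hb₁, hρgen b₂ hb₂]
  have hsep : ¬ ρmin b₁ =ᵐ[μ] ρmin b₂ := fun h =>
    hne (by rw [← hρgen b₁ hb₁, ← hρgen b₂ hb₂, mom_congr_ae h])
  have hφρ : Integrable (fun t => φ (ρ t)) μ :=
    hconv.convexOn.integrable_comp_smul_add_smul isOpen_Ioi (hρP b₁ hb₁).1 (hρP b₂ hb₂).1
      (hρpos b₁ hb₁) (hρpos b₂ hb₂) (hρint b₁ hb₁) (hρint b₂ hb₂) hε.le hε₁.le
      (add_sub_cancel ε 1)
  calc ψ (ε • b₁ + (1 - ε) • b₂) ≤ ∫ t, φ (ρ t) ∂μ := hmin _ ⟨ρ, hρ, hmom⟩ ρ hρ hmom hφρ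
    _ < ε * ψ b₁ + (1 - ε) * ψ b₂ := by
      rw [hψ b₁ hb₁, hψ b₂ hb₂]
      exact hconv.integral_comp_smul_add_smul_lt (hρpos b₁ hb₁) (hρpos b₂ hb₂) (hρint b₁ hb₁)
        (hρint b₂ hb₂) hφρ hsep hε hε₁ (add_sub_cancel ε 1)

/-- Strict convexity of the singular potential `ψ_s`.  Here `φ` is entropy-like
(strictly convex and `C¹` on `(0,∞)`, superlinear at `∞`, with `φ' → -∞` at `0⁺`),
and `ψ` is the singular potential: for each `b ∈ Q` the entropy functional attains its
minimum over densities generating `b` at a unique minimiser `ρmin b` (Borwein–Lewis),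
which is a.e. positive, and `ψ b` is this minimal value. -/
theorem singularPotential_strictConvex {X : Type*} [MeasurableSpace X]
    (μ : Measure X) [IsFiniteMeasure μ] {k : ℕ}
    (a : X → EuclideanSpace ℝ (Fin k)) (ha : MemLp a ⊤ μ)
    (φ φ' : ℝ → ℝ)
    (hconv : StrictConvexOn ℝ (Set.Ioi 0) φ) (hconv0 : ConvexOn ℝ (Set.Ici 0) φ)
    (hder : ∀ x ∈ Set.Ioi (0:ℝ), HasDerivAt φ (φ' x) x)
    (hderc : ContinuousOn φ' (Set.Ioi 0))
    (hsuper : Tendsto (fun x => φ x / x) atTop atTop)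
    (hder0 : Tendsto φ' (nhdsWithin 0 (Set.Ioi 0)) atBot)
    (ψ : EuclideanSpace ℝ (Fin k) → ℝ) (ρmin : EuclideanSpace ℝ (Fin k) → X → ℝ)
    (hρP : ∀ b ∈ momentSet μ a, ρmin b ∈ probDens μ)
    (hρgen : ∀ b ∈ momentSet μ a, mom μ a (ρmin b) = b)
    (hρpos : ∀ b ∈ momentSet μ a, ∀ᵐ t ∂μ, 0 < ρmin b t)
    (hρint : ∀ b ∈ momentSet μ a, Integrable (fun t => φ (ρmin b t)) μ)
    (hψ : ∀ b ∈ momentSet μ a, ψ b = ∫ t, φ (ρmin b t) ∂μ)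
    (hmin : ∀ b ∈ momentSet μ a, ∀ ρ ∈ probDens μ, mom μ a ρ = b →
      Integrable (fun t => φ (ρ t)) μ → ψ b ≤ ∫ t, φ (ρ t) ∂μ)
    (huniq : ∀ b ∈ momentSet μ a, ∀ ρ ∈ probDens μ, mom μ a ρ = b →
      Integrable (fun t => φ (ρ t)) μ → ψ b = ∫ t, φ (ρ t) ∂μ → ρ =ᵐ[μ] ρmin b) :
    ∀ b₁ ∈ momentSet μ a, ∀ b₂ ∈ momentSet μ a, b₁ ≠ b₂ →
      ∀ ε : ℝ, 0 < ε → ε < 1 →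
        ψ (ε • b₁ + (1 - ε) • b₂) < ε * ψ b₁ + (1 - ε) * ψ b₂ :=
  singularPotential_strictConvex_general μ a ha φ hconv ψ ρmin hρP hρgen hρpos hρint hψ hmin
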